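/- arXiv:2012.08118 — 2 statements merged into one kernel-verified Lean document; each statement's English description precedes it below -/
import Mathlib

section
/- Let d≥1 be an integer and let φ:(0,∞)→(0,∞) be nondecreasing and satisfy c(R/r)^{δ₀} ≤ φ(R)/φ(r) ≤ R/r for all 0<r<R<∞, where c>0 and δ₀∈(0,1]. For t,λ>0 set g_t(λ) := ∫_0^∞ (e^{−tφ(λr²)} − e^{−tφ(2λr²)}) e^{−r²/4} r^{d−1} dr. Then there exists a constant N=N(c,δ₀,d) such that g_t(λ) ≤ N t φ(λ) for every t>0 and λ>0. -/
open MeasureTheory Real Set Filter Topology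
open scoped ENNReal NNReal RealInnerProductSpace

noncomputable section

/-- `φ` is a Bernstein function with representation `φ(λ) = b λ + ∫_{(0,∞)} (1 - e^{-λ t}) μ(dt)`
(valid for `λ > 0`), where `b ≥ 0` and `μ` is a Lévy measure on `(0,∞)`. -/
def IsBernstein (φ : ℝ → ℝ) (b : ℝ) (μ : MeasureTheory.Measure ℝ) : Prop :=
  0 ≤ b ∧ (∫⁻ t in Set.Ioi (0:ℝ), ENNReal.ofReal (min 1 t) ∂μ) < ∞ ∧
    ∀ lam : ℝ, 0 < lam →
      φ lam = b * lam + ∫ t in Set.Ioi (0:ℝ), (1 - Real.exp (-lam * t)) ∂μ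

/-- The Bernstein function is nonzero: `b > 0` or `μ` is not the zero measure on `(0,∞)`. -/
def BernsteinNonzero (b : ℝ) (μ : MeasureTheory.Measure ℝ) : Prop :=
  0 < b ∨ μ (Set.Ioi 0) ≠ 0

/-- The lower scaling condition: `c (R/r)^{δ₀} ≤ φ(R)/φ(r)` for all `0 < r < R`. -/
def LowerScaling (φ : ℝ → ℝ) (c δ₀ : ℝ) : Prop :=
  ∀ r R : ℝ, 0 < r → r < R → c * (R / r) ^ δ₀ ≤ φ R / φ r

/-- The heat kernel of `φ(Δ)` on `ℝ^d`:
`p(t,x) = (2π)^{-d} ∫ e^{i ξ·x} e^{-t φ(|ξ|²)} dξ` (a real number). -/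
def heatKernel (d : ℕ) (φ : ℝ → ℝ) (t : ℝ) (x : EuclideanSpace ℝ (Fin d)) : ℝ :=
  (2 * Real.pi) ^ (-(d:ℝ)) *
    (∫ ξ : EuclideanSpace ℝ (Fin d),
      Complex.exp (Complex.I * (⟪ξ, x⟫ : ℂ)) *
        Complex.exp (-(t * φ (‖ξ‖ ^ 2) : ℝ) : ℂ)).re

/-- The Wright-type function
`φ_{α,β}(t,r) = t^{-β} ∑_{k≥0} (-r t^{-α})^k / (k! Γ(1-β-αk))`, with the convention
`1/Γ(z) = 0` at nonpositive integers (which holds for Mathlib's `Real.Gamma`). -/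
def wright (α β t r : ℝ) : ℝ :=
  t ^ (-β) * ∑' k : ℕ, (-(r * t ^ (-α))) ^ k / ((k.factorial : ℝ) * Real.Gamma (1 - β - α * k))

/-- `q_{α,β}(t,x) = ∫_0^∞ p(r,x) φ_{α,β}(t,r) dr`. -/
def qKernel (d : ℕ) (φ : ℝ → ℝ) (α β : ℝ) (t : ℝ) (x : EuclideanSpace ℝ (Fin d)) : ℝ :=
  ∫ r in Set.Ioi (0:ℝ), heatKernel d φ r x * wright α β t r

/-- The two-parameter Mittag-Leffler function `E_{a,b}(z) = ∑_{k≥0} z^k / Γ(ak+b)`. -/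
def mittagLeffler (a b z : ℝ) : ℝ := ∑' k : ℕ, z ^ k / Real.Gamma (a * k + b)

/-- Fourier transform with the convention `ℱ g (ξ) = ∫ e^{-i x·ξ} g(x) dx`. -/
def FT (d : ℕ) (g : EuclideanSpace ℝ (Fin d) → ℂ) (ξ : EuclideanSpace ℝ (Fin d)) : ℂ :=
  ∫ x : EuclideanSpace ℝ (Fin d), Complex.exp (-Complex.I * (⟪x, ξ⟫ : ℂ)) * g x

/-- Inverse Fourier transform with the convention
`ℱ^{-1} g (x) = (2π)^{-d} ∫ e^{i x·ξ} g(ξ) dξ`. -/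
def FTinv (d : ℕ) (g : EuclideanSpace ℝ (Fin d) → ℂ) (x : EuclideanSpace ℝ (Fin d)) : ℂ :=
  ((2 * Real.pi) ^ (-(d:ℝ)) : ℝ) *
    ∫ ξ : EuclideanSpace ℝ (Fin d), Complex.exp (Complex.I * (⟪x, ξ⟫ : ℂ)) * g ξ

/-- `φ(Δ) g = - ℱ^{-1}[φ(|ξ|²) ℱ g]` for a function `g : ℝ^d → ℝ`. -/
def phiDelta (d : ℕ) (φ : ℝ → ℝ) (g : EuclideanSpace ℝ (Fin d) → ℝ)
    (x : EuclideanSpace ℝ (Fin d)) : ℝ :=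
  -(FTinv d (fun ξ => (φ (‖ξ‖ ^ 2) : ℂ) * FT d (fun y => (g y : ℂ)) ξ) x).re

/-- The spacetime singular integral operator
`𝒢 f (t,x) = ∫_{-∞}^t ∫_{ℝ^d} q_{α,1}(t-s,y) (φ(Δ) f(s,·))(x-y) dy ds`. -/
def Gop (d : ℕ) (φ : ℝ → ℝ) (α : ℝ) (f : ℝ × EuclideanSpace ℝ (Fin d) → ℝ)
    (z : ℝ × EuclideanSpace ℝ (Fin d)) : ℝ :=
  ∫ s in Set.Iio z.1, ∫ y : EuclideanSpace ℝ (Fin d),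
    qKernel d φ α 1 (z.1 - s) y * phiDelta d φ (fun w => f (s, w)) (z.2 - y)

end

lemma auxIntegrable (d : ℕ) (hd : 1 ≤ d) :
    MeasureTheory.IntegrableOn
      (fun r : ℝ => (1 + 2*r^2) * Real.exp (-(r^2)/4) * r^(d-1)) (Set.Ioi 0) := by
  have c1 : (-1:ℝ) < ((d-1 : ℕ) : ℝ) := by
    have := Nat.cast_nonneg (α := ℝ) (d-1); linarith
  have c2 : (-1:ℝ) < ((d+1 : ℕ) : ℝ) := by
    have := Nat.cast_nonneg (α := ℝ) (d+1); linarith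
  have h1 := integrableOn_rpow_mul_exp_neg_mul_sq (b := 1/4) (by norm_num) c1
  have h2 := integrableOn_rpow_mul_exp_neg_mul_sq (b := 1/4) (by norm_num) c2
  refine MeasureTheory.IntegrableOn.congr_fun (h1.add (h2.const_mul 2))
    (fun r hr => ?_) measurableSet_Ioi
  have hr0 : (0:ℝ) < r := hr
  simp only [Pi.add_apply]
  rw [Real.rpow_natCast, Real.rpow_natCast]
  have hde : d + 1 = (d-1) + 2 := by omega
  rw [hde, pow_add]
  ring_nf

/-- Under the two-sided scaling condition, the quantity
`g_t(λ) = ∫_0^∞ (e^{-tφ(λr²)} - e^{-tφ(2λr²)}) e^{-r²/4} r^{d-1} dr` satisfies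
`g_t(λ) ≤ N t φ(λ)` with `N = N(c, δ₀, d)`. -/
theorem stmt3 (d : ℕ) (hd : 1 ≤ d) (c δ₀ : ℝ) (hc : 0 < c) (hδ : δ₀ ∈ Set.Ioc (0:ℝ) 1) :
    ∃ N : ℝ, 0 < N ∧ ∀ φ : ℝ → ℝ,
      (∀ x : ℝ, 0 < x → 0 < φ x) →
      (∀ x y : ℝ, 0 < x → x ≤ y → φ x ≤ φ y) →
      (∀ r R : ℝ, 0 < r → r < R → c * (R / r) ^ δ₀ ≤ φ R / φ r ∧ φ R / φ r ≤ R / r) →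
      ∀ t lam : ℝ, 0 < t → 0 < lam →
        (∫⁻ r in Set.Ioi (0:ℝ), ENNReal.ofReal
            ((Real.exp (-(t * φ (lam * r ^ 2))) - Real.exp (-(t * φ (2 * lam * r ^ 2)))) *
              Real.exp (-(r ^ 2) / 4) * r ^ (d - 1)))
          ≤ ENNReal.ofReal (N * (t * φ lam)) := by
  have hInt := auxIntegrable d hd
  have hnn : ∀ r ∈ Set.Ioi (0:ℝ),
      0 ≤ (1 + 2*r^2) * Real.exp (-(r^2)/4) * r^(d-1) := by
    intro r hr
    have hr0 : (0:ℝ) < r := hr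
    positivity
  have hI0 : 0 ≤ ∫ r in Set.Ioi (0:ℝ), (1 + 2*r^2) * Real.exp (-(r^2)/4) * r^(d-1) :=
    MeasureTheory.setIntegral_nonneg measurableSet_Ioi hnn
  refine ⟨(∫ r in Set.Ioi (0:ℝ), (1 + 2*r^2) * Real.exp (-(r^2)/4) * r^(d-1)) + 1,
    by linarith, ?_⟩
  intro φ hpos hmono hscal t lam ht hlam
  have hphil : 0 < φ lam := hpos lam hlam
  have htφ : 0 < t * φ lam := mul_pos ht hphil
  -- pointwise bound
  have key : ∀ r ∈ Set.Ioi (0:ℝ),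
      (Real.exp (-(t * φ (lam * r ^ 2))) - Real.exp (-(t * φ (2 * lam * r ^ 2)))) *
        Real.exp (-(r ^ 2) / 4) * r ^ (d - 1)
      ≤ (t * φ lam) * ((1 + 2*r^2) * Real.exp (-(r^2)/4) * r^(d-1)) := by
    intro r hr
    have hr0 : (0:ℝ) < r := hr
    have hr2 : 0 < r ^ 2 := by positivity
    have hb0 : 0 < 2 * lam * r ^ 2 := by positivity
    -- bound φ(2 λ r²) ≤ (1 + 2 r²) φ(λ)
    have hφb : φ (2 * lam * r ^ 2) ≤ (1 + 2*r^2) * φ lam := by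
      rcases le_or_gt (2 * r ^ 2) 1 with h2 | h2
      · have hm : φ (2 * lam * r ^ 2) ≤ φ lam := by
          apply hmono _ _ hb0
          nlinarith
        nlinarith
      · have hlt : lam < 2 * lam * r ^ 2 := by nlinarith
        have hu := (hscal lam (2 * lam * r ^ 2) hlam hlt).2
        have hq : (2 * lam * r ^ 2) / lam = 2 * r ^ 2 := by
          field_simp
        rw [hq, div_le_iff₀ hphil] at hu
        nlinarith
    -- bound on the exponential difference
    have hd1 : Real.exp (-(t * φ (lam * r ^ 2))) - Real.exp (-(t * φ (2 * lam * r ^ 2)))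
        ≤ t * φ (2 * lam * r ^ 2) := by
      have h1 : Real.exp (-(t * φ (lam * r ^ 2))) ≤ 1 := by
        apply Real.exp_le_one_iff.2
        have := (hpos _ (by positivity : (0:ℝ) < lam * r ^ 2))
        nlinarith
      have h2 : 1 - t * φ (2 * lam * r ^ 2) ≤ Real.exp (-(t * φ (2 * lam * r ^ 2))) := by
        have := Real.add_one_le_exp (-(t * φ (2 * lam * r ^ 2)))
        linarith
      linarith
    have hd2 : Real.exp (-(t * φ (lam * r ^ 2))) - Real.exp (-(t * φ (2 * lam * r ^ 2)))
        ≤ t * φ lam * (1 + 2*r^2) := by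
      calc _ ≤ t * φ (2 * lam * r ^ 2) := hd1
        _ ≤ t * ((1 + 2*r^2) * φ lam) := by
            exact mul_le_mul_of_nonneg_left hφb ht.le
        _ = t * φ lam * (1 + 2*r^2) := by ring
    have hE : 0 ≤ Real.exp (-(r^2)/4) := (Real.exp_pos _).le
    have hP : 0 ≤ r ^ (d-1) := pow_nonneg hr0.le _
    have := mul_le_mul_of_nonneg_right (mul_le_mul_of_nonneg_right hd2 hE) hP
    calc (Real.exp (-(t * φ (lam * r ^ 2))) - Real.exp (-(t * φ (2 * lam * r ^ 2)))) *
          Real.exp (-(r ^ 2) / 4) * r ^ (d - 1)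
        ≤ t * φ lam * (1 + 2*r^2) * Real.exp (-(r^2)/4) * r^(d-1) := this
      _ = (t * φ lam) * ((1 + 2*r^2) * Real.exp (-(r^2)/4) * r^(d-1)) := by ring
  calc (∫⁻ r in Set.Ioi (0:ℝ), ENNReal.ofReal
          ((Real.exp (-(t * φ (lam * r ^ 2))) - Real.exp (-(t * φ (2 * lam * r ^ 2)))) *
            Real.exp (-(r ^ 2) / 4) * r ^ (d - 1)))
      ≤ ∫⁻ r in Set.Ioi (0:ℝ), ENNReal.ofReal
          ((t * φ lam) * ((1 + 2*r^2) * Real.exp (-(r^2)/4) * r^(d-1))) := by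
        refine MeasureTheory.lintegral_mono_ae ?_
        refine (MeasureTheory.ae_restrict_iff' measurableSet_Ioi).2
          (Filter.Eventually.of_forall fun r hr => ENNReal.ofReal_le_ofReal (key r hr))
    _ = ENNReal.ofReal (t * φ lam) *
        ∫⁻ r in Set.Ioi (0:ℝ),
          ENNReal.ofReal ((1 + 2*r^2) * Real.exp (-(r^2)/4) * r^(d-1)) := by
        rw [← MeasureTheory.lintegral_const_mul' _ _ ENNReal.ofReal_ne_top]
        congr 1
        ext r
        rw [ENNReal.ofReal_mul htφ.le]
    _ = ENNReal.ofReal (t * φ lam) *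
        ENNReal.ofReal (∫ r in Set.Ioi (0:ℝ), (1 + 2*r^2) * Real.exp (-(r^2)/4) * r^(d-1)) := by
        rw [MeasureTheory.ofReal_integral_eq_lintegral_ofReal hInt
          ((MeasureTheory.ae_restrict_iff' measurableSet_Ioi).2
            (Filter.Eventually.of_forall hnn))]
    _ ≤ ENNReal.ofReal
          (((∫ r in Set.Ioi (0:ℝ), (1 + 2*r^2) * Real.exp (-(r^2)/4) * r^(d-1)) + 1) *
            (t * φ lam)) := by
        rw [← ENNReal.ofReal_mul htφ.le]
        exact ENNReal.ofReal_le_ofReal (by nlinarith)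
end

section
/- Let η be a probability measure on (0,∞), and for each integer n≥1 define p_n(x) := ∫_{(0,∞)} (4πs)^{−n/2} e^{−|x|²/(4s)} η(ds) for x∈ℝ^n. Then for every d≥1, every x∈ℝ^d with x≠0, and every coordinate index i, the partial derivative ∂p_d/∂x^i exists at x and equals −2π x^i p_{d+2}((x,0,0)), where (x,0,0)∈ℝ^{d+2} is x augmented by two zero coordinates. -/
/-!
Write `p_d(x) = G_{-d/2}(|x|²)` with `G_a(t) = ∫_{(0,∞)} (4πs)^a e^{-t/(4s)} η(ds)`. Since
`∂_t e^{-t/(4s)} = -e^{-t/(4s)}/(4s)` and `(4πs)^a/(4s) = π (4πs)^{a-1}`, differentiating under the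
integral gives `G_a' = -π G_{a-1}` for `t > 0`; this is legitimate for `a ≤ 0` because
`u^b e^{-c/u}` is bounded on `(0,∞)` when `b ≤ 0 < c`, and `η` is finite. The chain rule with
`∂_i |x|² = 2 x^i` and `|(x,0,0)| = |x|` then gives `∂_i p_d(x) = -2π x^i p_{d+2}((x,0,0))`.
-/

open MeasureTheory Real Set Filter Topology
open scoped ENNReal NNReal RealInnerProductSpace

noncomputable section

/-- The subordinated Gaussian density in dimension `n`:
`p_n(x) = ∫_{(0,∞)} (4πs)^{-n/2} e^{-|x|²/(4s)} η(ds)`. -/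
def subGauss (n : ℕ) (η : MeasureTheory.Measure ℝ) (x : EuclideanSpace ℝ (Fin n)) : ℝ :=
  ∫ s in Set.Ioi (0:ℝ), (4 * Real.pi * s) ^ (-(n:ℝ) / 2) * Real.exp (-‖x‖ ^ 2 / (4 * s)) ∂η

/-- The vector `(x, 0, 0) ∈ ℝ^{d+2}`: `x` augmented by two zero coordinates. -/
def padTwo (d : ℕ) (x : EuclideanSpace ℝ (Fin d)) : EuclideanSpace ℝ (Fin (d + 2)) :=
  (WithLp.equiv 2 (∀ _ : Fin (d + 2), ℝ)).symm
    (fun j => if h : (j : ℕ) < d then x ⟨j, h⟩ else 0)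

lemma rpow_mul_exp_neg_div_le {b c u : ℝ} (hb : b ≤ 0) (hc : 0 < c) (hu : 0 < u) :
    u ^ b * exp (-c / u) ≤ (-b / c) ^ (-b) := by
  have hpow := ProbabilityTheory.rpow_abs_le_mul_exp_abs u⁻¹ (neg_nonneg.mpr hb) hc.ne'
  rw [abs_of_pos (inv_pos.mpr hu), abs_of_pos hc, inv_rpow hu.le, ← rpow_neg hu.le, neg_neg,
    ← div_eq_mul_inv] at hpow
  calc u ^ b * exp (-c / u) ≤ (-b / c) ^ (-b) * exp (c / u) * exp (-c / u) := by gcongr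
    _ = (-b / c) ^ (-b) := by rw [mul_assoc, ← exp_add, neg_div u c, add_neg_cancel, exp_zero,
          mul_one]

/-- Here `t` stands for `|x|²` and, in dimension `n`, `a` for `-n/2`. -/
def gaussDensity (a t s : ℝ) : ℝ := (4 * π * s) ^ a * exp (-t / (4 * s))

def gaussMixture (a : ℝ) (η : Measure ℝ) (t : ℝ) : ℝ := ∫ s in Ioi 0, gaussDensity a t s ∂η

lemma subGauss_eq_gaussMixture (n : ℕ) (η : Measure ℝ) (x : EuclideanSpace ℝ (Fin n)) :
    subGauss n η x = gaussMixture (-(n : ℝ) / 2) η (‖x‖ ^ 2) := rfl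

lemma gaussDensity_nonneg (a t : ℝ) {s : ℝ} (hs : 0 < s) : 0 ≤ gaussDensity a t s := by
  unfold gaussDensity; positivity

lemma measurable_gaussDensity (a t : ℝ) : Measurable (gaussDensity a t) := by
  unfold gaussDensity; fun_prop

lemma gaussDensity_le {a t t' s : ℝ} (ha : a ≤ 0) (ht : 0 < t) (htt' : t ≤ t') (hs : 0 < s) :
    gaussDensity a t' s ≤ (-a / (π * t)) ^ (-a) := by
  calc gaussDensity a t' s ≤ gaussDensity a t s := by unfold gaussDensity; gcongr
    _ = (4 * π * s) ^ a * exp (-(π * t) / (4 * π * s)) := by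
        unfold gaussDensity; congr 2; field_simp
    _ ≤ (-a / (π * t)) ^ (-a) := rpow_mul_exp_neg_div_le ha (by positivity) (by positivity)

lemma hasDerivAt_gaussDensity (a t : ℝ) {s : ℝ} (hs : 0 < s) :
    HasDerivAt (fun t ↦ gaussDensity a t s) (-π * gaussDensity (a - 1) t s) t := by
  have h4πs : 4 * π * s ≠ 0 := by positivity
  have hexp : HasDerivAt (fun t ↦ exp (-t / (4 * s))) (exp (-t / (4 * s)) * (-1 / (4 * s))) t :=
    ((hasDerivAt_neg t).div_const (4 * s)).exp
  refine (hexp.const_mul ((4 * π * s) ^ a)).congr_deriv ?_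
  rw [gaussDensity, rpow_sub_one h4πs]
  field_simp

lemma integrableOn_gaussDensity (η : Measure ℝ) [IsFiniteMeasure η] {a t : ℝ} (ha : a ≤ 0)
    (ht : 0 < t) : IntegrableOn (gaussDensity a t) (Ioi 0) η := by
  refine Integrable.mono' (integrable_const ((-a / (π * t)) ^ (-a)))
    (measurable_gaussDensity a t).aestronglyMeasurable ?_
  filter_upwards [ae_restrict_mem measurableSet_Ioi] with s (hs : 0 < s)
  rw [Real.norm_of_nonneg (gaussDensity_nonneg a t hs)]
  exact gaussDensity_le ha ht le_rfl hs

theorem hasDerivAt_gaussMixture (η : Measure ℝ) [IsFiniteMeasure η] {a t : ℝ} (ha : a ≤ 0)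
    (ht : 0 < t) : HasDerivAt (gaussMixture a η) (-π * gaussMixture (a - 1) η t) t := by
  have hball : Metric.ball t (t / 2) ⊆ Ici (t / 2) := fun t' ht' ↦ by
    rw [Metric.mem_ball, Real.dist_eq, abs_lt] at ht'
    exact mem_Ici.mpr (by linarith)
  have hbound : ∀ᵐ s ∂η.restrict (Ioi 0), ∀ t' ∈ Metric.ball t (t / 2),
      ‖-π * gaussDensity (a - 1) t' s‖ ≤ π * (-(a - 1) / (π * (t / 2))) ^ (-(a - 1)) := by
    filter_upwards [ae_restrict_mem measurableSet_Ioi] with s (hs : 0 < s) t' ht'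
    rw [norm_mul, norm_neg, Real.norm_of_nonneg pi_pos.le,
      Real.norm_of_nonneg (gaussDensity_nonneg _ _ hs)]
    exact mul_le_mul_of_nonneg_left
      (gaussDensity_le (by linarith) (by positivity) (hball ht') hs) pi_pos.le
  have hdiff : ∀ᵐ s ∂η.restrict (Ioi 0), ∀ t' ∈ Metric.ball t (t / 2),
      HasDerivAt (gaussDensity a · s) (-π * gaussDensity (a - 1) t' s) t' := by
    filter_upwards [ae_restrict_mem measurableSet_Ioi] with s (hs : 0 < s) t' _
    exact hasDerivAt_gaussDensity a t' hs
  have := hasDerivAt_integral_of_dominated_loc_of_deriv_le (Metric.ball_mem_nhds t (half_pos ht))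
    (.of_forall fun t' ↦ (measurable_gaussDensity a t').aestronglyMeasurable)
    (integrableOn_gaussDensity η ha ht)
    ((measurable_gaussDensity (a - 1) t).const_mul _).aestronglyMeasurable
    hbound (integrable_const _) hdiff
  unfold gaussMixture
  rw [← integral_const_mul]
  exact this.2

lemma norm_padTwo (d : ℕ) (x : EuclideanSpace ℝ (Fin d)) : ‖padTwo d x‖ = ‖x‖ := by
  simp only [EuclideanSpace.norm_eq, Fin.sum_univ_add]
  simp [padTwo]

theorem stmt6_general (η : MeasureTheory.Measure ℝ) (hη : MeasureTheory.IsProbabilityMeasure η)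
    (d : ℕ)
    (x : EuclideanSpace ℝ (Fin d)) (hx : x ≠ 0) (i : Fin d) :
    HasDerivAt (fun h : ℝ => subGauss d η (x + h • EuclideanSpace.single i (1:ℝ)))
      (-2 * Real.pi * x i * subGauss (d + 2) η (padTwo d x)) 0 := by
  have hline : HasDerivAt (fun h : ℝ ↦ ‖x + h • EuclideanSpace.single i (1 : ℝ)‖ ^ 2)
      (2 * x i) 0 := by
    simpa [EuclideanSpace.inner_single_right] using
      (((hasDerivAt_id (0 : ℝ)).smul_const (EuclideanSpace.single i (1 : ℝ))).const_add x).norm_sq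
  have hmix := hasDerivAt_gaussMixture η (a := -(d : ℝ) / 2)
    (by linarith [d.cast_nonneg (α := ℝ)]) (pow_pos (norm_pos_iff.mpr hx) 2)
  rw [subGauss_eq_gaussMixture, norm_padTwo,
    show -((d + 2 : ℕ) : ℝ) / 2 = -(d : ℝ) / 2 - 1 by push_cast; ring]
  exact (hmix.comp_of_eq 0 hline (by simp)).congr_deriv (by ring)

/-- For a probability measure `η` on `(0,∞)`, the partial derivative
`∂ p_d / ∂ x^i` exists at every `x ≠ 0` and equals `-2π x^i p_{d+2}((x,0,0))`. -/
theorem stmt6 (η : MeasureTheory.Measure ℝ) (hη : MeasureTheory.IsProbabilityMeasure η)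
    (hsupp : η (Set.Iic 0) = 0) (d : ℕ) (hd : 1 ≤ d)
    (x : EuclideanSpace ℝ (Fin d)) (hx : x ≠ 0) (i : Fin d) :
    HasDerivAt (fun h : ℝ => subGauss d η (x + h • EuclideanSpace.single i (1:ℝ)))
      (-2 * Real.pi * x i * subGauss (d + 2) η (padTwo d x)) 0 :=
  stmt6_general η hη d x hx i
end
end
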